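/- The cardinal B-splines satisfy the convolution recurrence B_{n+1}(x) = ∫_0^1 B_n(x - t) dt for every natural number n and every real x. -/

import Mathlib

/-!
Integration over `t ∈ [0, 1]` commutes with the difference operator `Δ^{n+1}`, and the
fundamental theorem of calculus gives `∫₀¹ (y - t)₊ⁿ dt = (y₊^{n+1} - (y - 1)₊^{n+1}) / (n + 1)`.
Since `Δ^{n+2} f = Δ^{n+1} (f - f (· - 1))`, the integral of `Δ^{n+1} x₊ⁿ / n!` is therefore
`Δ^{n+2} x₊^{n+1} / (n + 1)!`.
-/

open MeasureTheory

noncomputable def truncPow (x : ℝ) (n : ℕ) : ℝ := if 0 ≤ x then x ^ n else 0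

noncomputable def findiff (m : ℕ) (f : ℝ → ℝ) (x : ℝ) : ℝ :=
  ∑ ℓ ∈ Finset.range (m + 1), (-1 : ℝ) ^ ℓ * (m.choose ℓ : ℝ) * f (x - ℓ)

noncomputable def Bspline (n : ℕ) (x : ℝ) : ℝ :=
  (1 / (n.factorial : ℝ)) * findiff (n + 1) (fun t => truncPow t n) x

open Set Finset

lemma findiff_succ (m : ℕ) (f : ℝ → ℝ) (x : ℝ) :
    findiff (m + 1) f x = findiff m (fun y => f y - f (y - 1)) x := by
  have hsplit : findiff m (fun y => f y - f (y - 1)) x =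
      ∑ ℓ ∈ range (m + 2), (-1 : ℝ) ^ ℓ * (m.choose ℓ : ℝ) * f (x - ℓ) +
        ∑ ℓ ∈ range (m + 1), (-1 : ℝ) ^ (ℓ + 1) * (m.choose ℓ : ℝ) * f (x - ↑(ℓ + 1)) := by
    rw [sum_range_succ, Nat.choose_succ_self, findiff]
    simp only [Nat.cast_zero, mul_zero, zero_mul, add_zero, ← sum_add_distrib]
    refine sum_congr rfl fun ℓ _ => ?_
    rw [Nat.cast_succ, sub_sub]
    ring
  rw [hsplit, findiff, sum_range_succ' _ (m + 1), sum_range_succ' _ (m + 1), add_right_comm,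
    ← sum_add_distrib]
  congr 1
  · refine sum_congr rfl fun ℓ _ => ?_
    rw [Nat.choose_succ_succ', Nat.cast_add]
    ring
  · simp

lemma findiff_const_mul (m : ℕ) (c : ℝ) (f : ℝ → ℝ) (x : ℝ) :
    findiff m (fun y => c * f y) x = c * findiff m f x := by
  simp only [findiff, mul_sum]
  exact sum_congr rfl fun ℓ _ => by ring

lemma integral_findiff_comp_sub (m : ℕ) {f : ℝ → ℝ} (hf : LocallyIntegrable f) (x a b : ℝ) :
    ∫ t in a..b, findiff m f (x - t) = findiff m (fun y => ∫ t in a..b, f (y - t)) x := by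
  have hint : ∀ y : ℝ, IntervalIntegrable (fun t => f (y - t)) volume a b := fun y => by
    simpa using ((hf.integrableOn_isCompact (isCompact_uIcc (a := y - a) (b := y - b))
      ).intervalIntegrable).comp_sub_left y
  have hcomm : ∀ (ℓ : ℕ) (t : ℝ), x - t - ℓ = x - ℓ - t := fun _ _ => sub_right_comm _ _ _
  simp only [findiff, hcomm]
  rw [intervalIntegral.integral_finsetSum fun ℓ _ => (hint _).const_mul _]
  simp only [intervalIntegral.integral_const_mul]

lemma truncPow_succ_eq_max_pow (x : ℝ) (n : ℕ) : truncPow x (n + 1) = max x 0 ^ (n + 1) := by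
  rcases le_total 0 x with hx | hx
  · simp [truncPow, hx]
  · rcases hx.eq_or_lt with rfl | hx
    · simp [truncPow]
    · simp [truncPow, hx.not_ge, hx.le]

lemma continuous_truncPow_succ (n : ℕ) : Continuous fun x => truncPow x (n + 1) := by
  simp only [truncPow_succ_eq_max_pow]
  fun_prop

/-- A right derivative, because for `n = 0` the function `x₊` is not differentiable at `0`. -/
lemma hasDerivWithinAt_truncPow_succ_Ioi (n : ℕ) (x : ℝ) :
    HasDerivWithinAt (fun y => truncPow y (n + 1)) ((n + 1) * truncPow x n) (Ioi x) x := by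
  rcases le_or_gt 0 x with hx | hx
  · have hpow := (hasDerivAt_pow (n + 1) x).hasDerivWithinAt (s := Ioi x)
    simp only [truncPow, hx, if_true, Nat.cast_succ, add_tsub_cancel_right] at hpow ⊢
    refine hpow.congr (fun y hy => ?_) (by simp [hx])
    simp [hx.trans hy.le]
  · have hzero : (fun y => truncPow y (n + 1)) =ᶠ[nhds x] fun _ => 0 := by
      filter_upwards [Iio_mem_nhds hx] with y hy
      simp [truncPow, not_le.mpr (show y < 0 from hy)]
    simpa [truncPow, hx.not_ge] using
      ((hasDerivAt_const x (0 : ℝ)).congr_of_eventuallyEq hzero).hasDerivWithinAt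

lemma locallyIntegrable_truncPow (n : ℕ) : LocallyIntegrable (fun x => truncPow x n) := by
  have : (fun x => truncPow x n) = (Ici (0 : ℝ)).indicator (· ^ n) := by
    ext x
    simp [truncPow, indicator_apply]
  rw [this]
  exact (continuous_pow n).locallyIntegrable.indicator measurableSet_Ici

lemma integral_truncPow (n : ℕ) (a b : ℝ) :
    ∫ s in a..b, truncPow s n = (truncPow b (n + 1) - truncPow a (n + 1)) / (n + 1) := by
  have hint :=
    (locallyIntegrable_truncPow n).integrableOn_isCompact (isCompact_uIcc (a := a) (b := b))
  rw [eq_div_iff (by positivity), mul_comm, ← intervalIntegral.integral_const_mul]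
  exact intervalIntegral.integral_eq_sub_of_hasDeriv_right
    (continuous_truncPow_succ n).continuousOn
    (fun x _ => hasDerivWithinAt_truncPow_succ_Ioi n x) (hint.intervalIntegrable.const_mul _)

lemma integral_truncPow_sub (n : ℕ) (y : ℝ) :
    ∫ t in (0 : ℝ)..1, truncPow (y - t) n =
      (truncPow y (n + 1) - truncPow (y - 1) (n + 1)) / (n + 1) := by
  rw [intervalIntegral.integral_comp_sub_left (fun s => truncPow s n), sub_zero, integral_truncPow]

theorem Bspline_convolution_recurrence (n : ℕ) (x : ℝ) :
    Bspline (n + 1) x = ∫ t in (0:ℝ)..1, Bspline n (x - t) := by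
  have hfac : ((n + 1).factorial : ℝ) = (n + 1) * n.factorial := by
    push_cast [Nat.factorial_succ]; ring
  calc Bspline (n + 1) x
      = 1 / (n + 1).factorial * findiff (n + 1)
          (fun y => truncPow y (n + 1) - truncPow (y - 1) (n + 1)) x := by
        rw [Bspline, findiff_succ]
    _ = 1 / n.factorial * findiff (n + 1)
          (fun y => 1 / (n + 1) * (truncPow y (n + 1) - truncPow (y - 1) (n + 1))) x := by
        rw [findiff_const_mul, hfac]
        field_simp
    _ = 1 / n.factorial * findiff (n + 1) (fun y => ∫ t in (0 : ℝ)..1, truncPow (y - t) n) x := by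
        simp only [integral_truncPow_sub, one_div_mul_eq_div]
    _ = ∫ t in (0:ℝ)..1, Bspline n (x - t) := by
        rw [← integral_findiff_comp_sub _ (locallyIntegrable_truncPow n),
          ← intervalIntegral.integral_const_mul]
        rfl
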